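/- arXiv:1109.5197 — 2 statements merged into one kernel-verified Lean document; each statement's English description precedes it below -/
import Mathlib

section
/- Let f : [0,1]^N → [0,1]^N be differentiable, D a positive diagonal N×N real matrix, and x̄ a point with f(x̄) = x̄. If ‖f'(x̄)‖ < min_i D_ii / (√N · ‖D‖), where ‖·‖ is the Frobenius norm, then every eigenvalue λ of the Jacobian matrix D·f'(x̄) - D has negative real part. -/
/-!
By Gershgorin's theorem an eigenvalue `λ` of `D J - D` lies, for some row `k`, in the disc of
centre `-D_kk` and radius `Σ_j |D_kk J_kj| ≤ ‖D‖ √N ‖J‖` (Cauchy–Schwarz on the row of `J`).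
The hypothesis makes this radius smaller than `D_kk`, and such a disc lies in the open left
half-plane.
-/

/-- The unit cube `[0,1]^N` in `ℝ^N`. -/
def unitCube (N : ℕ) : Set (EuclideanSpace ℝ (Fin N)) :=
  {x | ∀ i, x i ∈ Set.Icc (0 : ℝ) 1}

/-- The Frobenius norm of a real `N × N` matrix. -/
noncomputable def frobNorm {N : ℕ} (B : Matrix (Fin N) (Fin N) ℝ) : ℝ :=
  Real.sqrt (∑ i, ∑ j, (B i j) ^ 2)

theorem Matrix.hasEigenvalue_toLin'_of_mulVec_eq {R n : Type*} [CommRing R] [Fintype n]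
    [DecidableEq n] {A : Matrix n n R} {μ : R} {v : n → R} (hv : v ≠ 0) (h : A.mulVec v = μ • v) :
    Module.End.HasEigenvalue (Matrix.toLin' A) μ :=
  Module.End.hasEigenvalue_of_hasEigenvector
    ⟨Module.End.mem_eigenspace_iff.mpr (by rwa [Matrix.toLin'_apply]), hv⟩

theorem Matrix.IsDiag.exists_norm_add_le_sum_norm_of_hasEigenvalue_sub
    {K n : Type*} [NormedField K] [Fintype n] [DecidableEq n] {D : Matrix n n K}
    (hD : D.IsDiag) (B : Matrix n n K) {μ : K}
    (hμ : Module.End.HasEigenvalue (Matrix.toLin' (B - D)) μ) :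
    ∃ k, ‖μ + D k k‖ ≤ ∑ j, ‖B k j‖ := by
  obtain ⟨k, hk⟩ := eigenvalue_mem_ball hμ
  refine ⟨k, ?_⟩
  have hoff : ∀ j ∈ Finset.univ.erase k, (B - D) k j = B k j := fun j hj => by
    rw [Matrix.sub_apply, hD (Finset.ne_of_mem_erase hj).symm, sub_zero]
  rw [mem_closedBall_iff_norm, Finset.sum_congr rfl fun j hj => congrArg norm (hoff j hj),
    Matrix.sub_apply] at hk
  calc ‖μ + D k k‖ = ‖(μ - (B k k - D k k)) + B k k‖ := by ring_nf
    _ ≤ ‖μ - (B k k - D k k)‖ + ‖B k k‖ := norm_add_le _ _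
    _ ≤ ∑ j ∈ Finset.univ.erase k, ‖B k j‖ + ‖B k k‖ := by gcongr
    _ = ∑ j, ‖B k j‖ := Finset.sum_erase_add _ _ (Finset.mem_univ k)

theorem Matrix.IsDiag.mul_apply {α n m : Type*} [NonUnitalNonAssocSemiring α] [Fintype n]
    [DecidableEq n] {D : Matrix n n α} (hD : D.IsDiag) (M : Matrix n m α) (i : n) (j : m) :
    (D * M) i j = D i i * M i j := by
  conv_lhs => rw [← hD.diagonal_diag, Matrix.diagonal_mul, Matrix.diag_apply]

theorem abs_le_frobNorm {N : ℕ} (B : Matrix (Fin N) (Fin N) ℝ) (i j : Fin N) :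
    |B i j| ≤ frobNorm B := by
  refine Real.abs_le_sqrt ?_
  calc B i j ^ 2 ≤ ∑ j', B i j' ^ 2 :=
        Finset.single_le_sum (f := fun j' => B i j' ^ 2) (fun j' _ => sq_nonneg _)
          (Finset.mem_univ j)
    _ ≤ ∑ i', ∑ j', B i' j' ^ 2 :=
        Finset.single_le_sum (f := fun i' => ∑ j', B i' j' ^ 2)
          (fun i' _ => Finset.sum_nonneg fun j' _ => sq_nonneg _) (Finset.mem_univ i)

theorem sum_abs_le_sqrt_mul_frobNorm {N : ℕ} (B : Matrix (Fin N) (Fin N) ℝ) (i : Fin N) :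
    ∑ j, |B i j| ≤ Real.sqrt N * frobNorm B := by
  rw [frobNorm, ← Real.sqrt_mul (Nat.cast_nonneg N)]
  refine Real.le_sqrt_of_sq_le ?_
  calc (∑ j, |B i j|) ^ 2 ≤ N * ∑ j, B i j ^ 2 := by
        simpa using sq_sum_le_card_mul_sum_sq (s := Finset.univ) (f := fun j => |B i j|)
    _ ≤ N * ∑ i', ∑ j, B i' j ^ 2 :=
        mul_le_mul_of_nonneg_left (Finset.single_le_sum (f := fun i' => ∑ j, B i' j ^ 2)
          (fun i' _ => Finset.sum_nonneg fun j _ => sq_nonneg _) (Finset.mem_univ i))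
          (Nat.cast_nonneg N)

theorem sum_abs_diag_mul_le_frobNorm_mul {N : ℕ} {D : Matrix (Fin N) (Fin N) ℝ} (hD : D.IsDiag)
    (J : Matrix (Fin N) (Fin N) ℝ) (i : Fin N) :
    ∑ j, |(D * J) i j| ≤ Real.sqrt N * frobNorm D * frobNorm J := by
  simp only [hD.mul_apply, abs_mul, ← Finset.mul_sum]
  calc |D i i| * ∑ j, |J i j| ≤ frobNorm D * (Real.sqrt N * frobNorm J) :=
        mul_le_mul (abs_le_frobNorm D i i) (sum_abs_le_sqrt_mul_frobNorm J i)
          (Finset.sum_nonneg fun j _ => abs_nonneg _) (Real.sqrt_nonneg _)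
    _ = Real.sqrt N * frobNorm D * frobNorm J := by ring

-- with `c = 0` the hypothesis reads `a < 0`, since `b / 0 = 0`
theorem mul_lt_of_lt_div_of_nonneg {α : Type*} [Field α] [LinearOrder α] [IsStrictOrderedRing α]
    {a b c : α} (ha : 0 ≤ a) (hc : 0 ≤ c) (h : a < b / c) : c * a < b := by
  rcases hc.eq_or_lt with rfl | hc
  · rw [div_zero] at h
    exact absurd h ha.not_gt
  · rwa [lt_div_iff₀ hc, mul_comm] at h

theorem Complex.re_neg_of_norm_add_ofReal_lt {z : ℂ} {r : ℝ} (h : ‖z + r‖ < r) : z.re < 0 := by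
  have := (Complex.re_le_norm (z + r)).trans_lt h
  simp only [Complex.add_re, Complex.ofReal_re] at this
  linarith

theorem steady_state_stable_general {N : ℕ}
    (J D : Matrix (Fin N) (Fin N) ℝ)
    (hDdiag : ∀ i j, i ≠ j → D i j = 0)
    (hlt : ∀ i, frobNorm J < D i i / (Real.sqrt N * frobNorm D)) :
    ∀ lam : ℂ, (∃ v : Fin N → ℂ, v ≠ 0 ∧
      ((D * J - D).map (Complex.ofReal)).mulVec v = lam • v) → lam.re < 0 := by
  rintro lam ⟨v, hv0, hev⟩
  have hD : D.IsDiag := hDdiag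
  rw [Matrix.map_sub _ Complex.ofReal_sub] at hev
  obtain ⟨k, hk⟩ := (hD.map Complex.ofReal_zero).exists_norm_add_le_sum_norm_of_hasEigenvalue_sub
    _ (Matrix.hasEigenvalue_toLin'_of_mulVec_eq hv0 hev)
  refine Complex.re_neg_of_norm_add_ofReal_lt (r := D k k) ?_
  calc ‖lam + D k k‖ ≤ ∑ j, ‖(D * J).map Complex.ofReal k j‖ := hk
    _ = ∑ j, |(D * J) k j| := by simp only [Matrix.map_apply, Complex.norm_real, Real.norm_eq_abs]
    _ ≤ Real.sqrt N * frobNorm D * frobNorm J := sum_abs_diag_mul_le_frobNorm_mul hD J k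
    _ < D k k := mul_lt_of_lt_div_of_nonneg (Real.sqrt_nonneg _)
        (mul_nonneg (Real.sqrt_nonneg _) (Real.sqrt_nonneg _)) (hlt k)

/-- Stability lemma: if `f : [0,1]^N → [0,1]^N` is differentiable at a fixed point `x̄`
with Jacobian matrix `J`, `D` is a positive diagonal matrix, and
`‖J‖_F < min_i D_ii / (√N ‖D‖_F)`, then every eigenvalue of the Jacobian `D·J - D`
of the vector field `x ↦ D(f(x) - x)` at `x̄` has negative real part. -/
theorem steady_state_stable {N : ℕ}
    (f : EuclideanSpace ℝ (Fin N) → EuclideanSpace ℝ (Fin N))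
    (hmaps : Set.MapsTo f (unitCube N) (unitCube N))
    (J D : Matrix (Fin N) (Fin N) ℝ)
    (xbar : EuclideanSpace ℝ (Fin N)) (hxbar : xbar ∈ unitCube N)
    (hderiv : HasFDerivAt f (Matrix.toEuclideanCLM (𝕜 := ℝ) J : _) xbar)
    (hfix : f xbar = xbar)
    (hDdiag : ∀ i j, i ≠ j → D i j = 0) (hDpos : ∀ i, 0 < D i i)
    (hlt : ∀ i, frobNorm J < D i i / (Real.sqrt N * frobNorm D)) :
    ∀ lam : ℂ, (∃ v : Fin N → ℂ, v ≠ 0 ∧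
      ((D * J - D).map (Complex.ofReal)).mulVec v = lam • v) → lam.re < 0 :=
  steady_state_stable_general J D hDdiag hlt
end

section
/- Uniqueness part of the main theorem: In the setting where g_n : [0,1]^N → [0,1]^N are differentiable, if additionally the derivatives g_n' converge uniformly to 0 on each K_x, then there exists n₁ such that for all n ≥ n₁ and each x ∈ S with f(x) = x, the fixed point of g_n in the convex compact set K_x is unique. -/
/-!
For `n` large, `‖g_n'‖ ≤ 1/2` on the convex set `K_x`, so by the mean value inequality `g_n` is a
`1/2`-contraction there; this gives uniqueness at once. For existence, `g_n (L x)` is close to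
`L (f x) = L x`, so `g_n` maps a small closed ball around `L x`, intersected with `K_x`, into
itself: it lands in the ball by the contraction estimate, and in `K_x` because `g_n` preserves the
cube and `K_x` is a relative neighbourhood of `L x` in the cube. Banach's theorem then applies.
-/

open Filter

open Metric Function Set
open scoped NNReal

section FixedPoints

variable {X : Type*} [MetricSpace X] {f : X → X} {K : ℝ≥0} {s : Set X}

theorem LipschitzOnWith.eq_of_isFixedPt (hf : LipschitzOnWith K f s) (hK : K < 1) {p q : X}
    (hp : p ∈ s) (hq : q ∈ s) (hfp : IsFixedPt f p) (hfq : IsFixedPt f q) : p = q := by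
  have hdist := hf.dist_le_mul p hp q hq
  rw [hfp, hfq] at hdist
  have hK' : (K : ℝ) < 1 := hK
  exact dist_le_zero.1 (by nlinarith [dist_nonneg (x := p) (y := q)])

theorem LipschitzOnWith.exists_isFixedPt_of_closedBall_inter_subset [CompleteSpace X]
    (hf : LipschitzOnWith K f s) (hK : K < 1) (hs : IsClosed s) {t : Set X} (hft : MapsTo f s t)
    {a : X} (ha : a ∈ s) {r : ℝ} (hball : closedBall a r ∩ t ⊆ s)
    (hfa : dist (f a) a ≤ (1 - K) * r) : ∃ p ∈ s, IsFixedPt f p := by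
  have hK' : (K : ℝ) < 1 := hK
  have hr : 0 ≤ r := nonneg_of_mul_nonneg_right (dist_nonneg.trans hfa) (by linarith)
  set B := closedBall a r ∩ s
  have hB : MapsTo f B B := by
    rintro p ⟨hpa, hps⟩
    have hfpa : dist (f p) a ≤ r :=
      calc dist (f p) a ≤ dist (f p) (f a) + dist (f a) a := dist_triangle _ _ _
        _ ≤ K * r + (1 - K) * r :=
          add_le_add ((hf.dist_le_mul p hps a ha).trans
            (mul_le_mul_of_nonneg_left (mem_closedBall.1 hpa) K.2)) hfa
        _ = r := by ring
    exact ⟨hfpa, hball ⟨hfpa, hft hps⟩⟩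
  have hcontr : ContractingWith K (hB.restrict f B B) :=
    ⟨hK, (hf.mono inter_subset_right).mapsToRestrict hB⟩
  obtain ⟨p, hpB, hp, -⟩ := hcontr.exists_fixedPoint' (isClosed_closedBall.inter hs).isComplete hB
    ⟨mem_closedBall_self hr, ha⟩ (edist_ne_top _ _)
  exact ⟨p, hpB.2, hp⟩

end FixedPoints

theorem TendstoUniformlyOn.eventually_lipschitzOnWith_of_fderiv {E F ι : Type*}
    [NormedAddCommGroup E] [NormedSpace ℝ E] [NormedAddCommGroup F] [NormedSpace ℝ F]
    {l : Filter ι} {g : ι → E → F} {s : Set E} (hs : Convex ℝ s)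
    (hg : ∀ n, ∀ y ∈ s, DifferentiableAt ℝ (g n) y)
    (h : TendstoUniformlyOn (fun n y => fderiv ℝ (g n) y) 0 l s) {C : ℝ≥0} (hC : 0 < C) :
    ∀ᶠ n in l, LipschitzOnWith C (g n) s := by
  filter_upwards [tendstoUniformlyOn_iff.1 h C hC] with n hn
  refine hs.lipschitzOnWith_of_nnnorm_fderiv_le (hg n) fun y hy => ?_
  have hy := hn y hy
  rw [Pi.zero_apply, dist_zero_left] at hy
  exact_mod_cast hy.le

theorem main_uniqueness_general {N : ℕ} {S : Type*} [Fintype S] (f : S → S)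
    (K : S → Set (EuclideanSpace ℝ (Fin N)))
    (hsub : ∀ x, K x ⊆ unitCube N)
    (hconv : ∀ x, Convex ℝ (K x)) (hcomp : ∀ x, IsCompact (K x))
    (L : S → EuclideanSpace ℝ (Fin N)) (hL : ∀ x, L x ∈ K x)
    (hLint : ∀ x, K x ∈ nhdsWithin (L x) (unitCube N))
    (g : ℕ → EuclideanSpace ℝ (Fin N) → EuclideanSpace ℝ (Fin N))
    (hgdiff : ∀ n, Differentiable ℝ (g n))
    (hgmaps : ∀ n, Set.MapsTo (g n) (unitCube N) (unitCube N))
    (hunif : ∀ x, TendstoUniformlyOn (fun n => g n) (fun _ => L (f x)) atTop (K x))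
    (hderiv : ∀ x, TendstoUniformlyOn (fun n y => fderiv ℝ (g n) y)
      (fun _ => (0 : EuclideanSpace ℝ (Fin N) →L[ℝ] EuclideanSpace ℝ (Fin N))) atTop (K x)) :
    ∃ n₁ : ℕ, ∀ n ≥ n₁, ∀ x : S, f x = x → ∃! p, p ∈ K x ∧ g n p = p := by
  have key : ∀ x, ∀ᶠ n in atTop, f x = x → ∃! p, p ∈ K x ∧ g n p = p := by
    intro x
    obtain ⟨ε, hε, hball⟩ := mem_nhdsWithin_iff.1 (hLint x)
    have hlip := (hderiv x).eventually_lipschitzOnWith_of_fderiv (hconv x)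
      (fun n y _ => (hgdiff n).differentiableAt) (C := 2⁻¹) (by norm_num)
    have hclose := tendsto_nhds.1 ((hunif x).tendsto_at (hL x)) (ε / 4) (by positivity)
    filter_upwards [hlip, hclose] with n hlip hclose hfx
    rw [hfx] at hclose
    obtain ⟨p, hp, hfix⟩ := hlip.exists_isFixedPt_of_closedBall_inter_subset (by norm_num)
      (hcomp x).isClosed ((hgmaps n).mono_left (hsub x)) (hL x) (r := ε / 2)
      ((inter_subset_inter_left _ (closedBall_subset_ball (half_lt_self hε))).trans hball)
      (by norm_num; linarith)
    exact ⟨p, ⟨hp, hfix⟩, fun q ⟨hq, hqfix⟩ => hlip.eq_of_isFixedPt (by norm_num) hq hp hqfix hfix⟩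
  simpa using eventually_all.2 key

/-- Uniqueness part of the main theorem: in the setting of the correspondence theorem,
if the `g_n` are differentiable and `g_n' → 0` uniformly on each `K_x`, then eventually
(in `n`) for each fixed point `x` of `f`, the fixed point of `g_n` in `K_x` is unique:
`g_n` has exactly one fixed point in `K_x`. -/
theorem main_uniqueness {N : ℕ} {S : Type*} [Fintype S] (f : S → S)
    (K : S → Set (EuclideanSpace ℝ (Fin N)))
    (hsub : ∀ x, K x ⊆ unitCube N) (hne : ∀ x, (K x).Nonempty)
    (hconv : ∀ x, Convex ℝ (K x)) (hcomp : ∀ x, IsCompact (K x))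
    (hdisj : ∀ x y, x ≠ y → Disjoint (K x) (K y))
    (L : S → EuclideanSpace ℝ (Fin N)) (hL : ∀ x, L x ∈ K x)
    (hLint : ∀ x, K x ∈ nhdsWithin (L x) (unitCube N))
    (g : ℕ → EuclideanSpace ℝ (Fin N) → EuclideanSpace ℝ (Fin N))
    (hgdiff : ∀ n, Differentiable ℝ (g n))
    (hgmaps : ∀ n, Set.MapsTo (g n) (unitCube N) (unitCube N))
    (hunif : ∀ x, TendstoUniformlyOn (fun n => g n) (fun _ => L (f x)) atTop (K x))
    (hderiv : ∀ x, TendstoUniformlyOn (fun n y => fderiv ℝ (g n) y)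
      (fun _ => (0 : EuclideanSpace ℝ (Fin N) →L[ℝ] EuclideanSpace ℝ (Fin N))) atTop (K x)) :
    ∃ n₁ : ℕ, ∀ n ≥ n₁, ∀ x : S, f x = x → ∃! p, p ∈ K x ∧ g n p = p :=
  main_uniqueness_general f K hsub hconv hcomp L hL hLint g hgdiff hgmaps hunif hderiv
end
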